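/- arXiv:2110.06077 — 2 statements merged into one kernel-verified Lean document; each statement's English description precedes it below -/
import Mathlib

section
/- Assume c₀ := min_{0≤y≤N} p̂(y) > 0. Fix ε ∈ (0,1), δ > 0, and a measurable set B ⊆ [0,1] whose complement has Lebesgue measure at most δ, and set η₁ := max_{y≠y′} sup_{γ∈B} p_A(y|γ)·p_A(y′|γ) and η₂ := max_y sup_{γ∈B} ∑_{y′≠y} p_A(y|γ)·p_A(y′|γ). Let p^(t) be a probability density on [0,1] with p̄^(t) := sup_{γ∈[0,1]} p^(t)(γ) < ∞, with marginal p^(t)_MA satisfying ‖p^(t)_MA − p̂‖₁ ≤ ε·c₀, and let p^(t+1) be its unregularized NPEM update with marginal p^(t+1)_MA. Then ‖p^(t+1)_MA − p̂‖₁ ≤ ( (N+1)(η₁ + p̄^(t)·δ)/c₀ + η₂/c₀ + p̄^(t)·δ/c₀ + (1 + 1/(1−ε))·‖p^(t)_MA − p̂‖₁/c₀ + (1/(1−ε))·‖p^(t)_MA − p̂‖₁²/c₀² ) · ‖p^(t)_MA − p̂‖₁, where ‖g‖₁ = ∑_{y=0}^N |g(y)|. -/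
open MeasureTheory Set Filter Topology

/-- Lebesgue measure restricted to `[0,1]`. -/
noncomputable def lebI : Measure ℝ := volume.restrict (Set.Icc 0 1)

/-- A probability density on `[0,1]`. -/
def IsDensity (f : ℝ → ℝ) : Prop :=
  Measurable f ∧ (∀ γ, 0 ≤ f γ) ∧ ∫ γ, f γ ∂lebI = 1

/-- Implied marginal `p_MA(y) = ∫₀¹ p_A(y|γ) p_M(γ) dγ` of a density `p_M`. -/
noncomputable def marginD (pA : ℕ → ℝ → ℝ) (p : ℝ → ℝ) (y : ℕ) : ℝ :=
  ∫ γ, pA y γ * p γ ∂lebI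

/-- The unregularized NPEM update `p′_M(γ) = ∑_y p_A(y|γ) p̂(y) p_M(γ)/p_MA(y)`. -/
noncomputable def npUpd0 (N : ℕ) (pA : ℕ → ℝ → ℝ) (phat : ℕ → ℝ) (p : ℝ → ℝ) :
    ℝ → ℝ := fun γ =>
  ∑ y ∈ Finset.range (N + 1), pA y γ * phat y * p γ / marginD pA p y

/-! Write `J(y,y') = ∫ p_A(y|γ) p_A(y'|γ) p(γ) dγ` (symmetric, with row sums `p_MA(y)`),
`S(y) = ∑_{y'≠y} J(y,y')` and `d = p_MA - p̂`. The updated marginal is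
`p'_MA(y) = ∑_{y'} p̂(y') J(y,y') / p_MA(y')`, whence
`p'_MA(y) - p̂(y) = S(y) d(y) / p_MA(y) - ∑_{y'≠y} J(y,y') d(y') / p_MA(y')`.
Summing absolute values and using the symmetry of `J` gives
`‖p'_MA - p̂‖₁ ≤ ∑_y 2 S(y) / p_MA(y) · |d(y)|`. Splitting the integrals over `B` and its
complement bounds `S(y)` both by `N (η₁ + p̄δ)` and by `η₂ + p̄δ`, while
`p_MA(y) ≥ c₀ - ‖d‖₁ > 0` controls the denominators. -/

theorem integral_le_of_le_mul_on_of_ae_le {α : Type*} [MeasurableSpace α] {μ : Measure α}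
    [IsFiniteMeasure μ] {f p : α → ℝ} {B : Set α} {c M : ℝ} (hB : MeasurableSet B)
    (hf : Integrable f μ) (hp : Integrable p μ) (hp0 : 0 ≤ᵐ[μ] p) (hc : 0 ≤ c)
    (hfB : ∀ x ∈ B, f x ≤ c * p x) (hfM : ∀ᵐ x ∂μ, f x ≤ M) :
    ∫ x, f x ∂μ ≤ c * ∫ x, p x ∂μ + M * μ.real Bᶜ := by
  have hin : ∫ x in B, f x ∂μ ≤ c * ∫ x, p x ∂μ :=
    calc ∫ x in B, f x ∂μ ≤ ∫ x in B, c * p x ∂μ :=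
          setIntegral_mono_on hf.integrableOn (hp.const_mul c).integrableOn hB hfB
      _ = c * ∫ x in B, p x ∂μ := integral_const_mul c _
      _ ≤ c * ∫ x, p x ∂μ := mul_le_mul_of_nonneg_left (setIntegral_le_integral hp hp0) hc
  have hout : ∫ x in Bᶜ, f x ∂μ ≤ M * μ.real Bᶜ :=
    calc ∫ x in Bᶜ, f x ∂μ ≤ ∫ x in Bᶜ, M ∂μ :=
          integral_mono_ae hf.integrableOn (integrableOn_const (measure_ne_top _ _))
            (ae_restrict_of_ae hfM)
      _ = M * μ.real Bᶜ := by rw [setIntegral_const, smul_eq_mul, mul_comm]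
  rw [← integral_add_compl hB hf]
  exact add_le_add hin hout

instance isFiniteMeasure_lebI : IsFiniteMeasure lebI :=
  isFiniteMeasure_restrict.2 (by simp [Real.volume_Icc])

theorem lebI_real_compl_le {B : Set ℝ} {δ : ℝ} (hB : MeasurableSet B) (hδ : 0 ≤ δ)
    (hBc : volume (Icc (0 : ℝ) 1 \ B) ≤ ENNReal.ofReal δ) : lebI.real Bᶜ ≤ δ := by
  rw [lebI, measureReal_restrict_apply hB.compl, ← Set.sdiff_eq_compl_inter]
  exact ENNReal.toReal_le_of_le_ofReal hδ hBc

namespace IsDensity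

variable {p g : ℝ → ℝ}

theorem integrable (hp : IsDensity p) : Integrable p lebI :=
  Integrable.of_integral_ne_zero (by rw [hp.2.2]; exact one_ne_zero)

theorem integrable_mul (hp : IsDensity p) (hg : Measurable g)
    (hg1 : ∀ γ ∈ Icc (0 : ℝ) 1, |g γ| ≤ 1) : Integrable (fun γ => g γ * p γ) lebI :=
  hp.integrable.bdd_mul hg.aestronglyMeasurable
    ((ae_restrict_iff' measurableSet_Icc).2 (Eventually.of_forall hg1))

theorem integral_mul_le {B : Set ℝ} {pbar δ η : ℝ} (hp : IsDensity p)
    (hpbar : ∀ γ ∈ Icc (0 : ℝ) 1, p γ ≤ pbar) (hB : MeasurableSet B) (hBc : lebI.real Bᶜ ≤ δ)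
    (hg : Measurable g) (hg0 : ∀ γ, 0 ≤ g γ) (hg1 : ∀ γ ∈ Icc (0 : ℝ) 1, g γ ≤ 1)
    (hgB : ∀ γ ∈ B, g γ ≤ η) (hη : 0 ≤ η) :
    ∫ γ, g γ * p γ ∂lebI ≤ η + pbar * δ := by
  obtain ⟨-, hp0, hp1⟩ := id hp
  have hpbar0 : 0 ≤ pbar := (hp0 0).trans (hpbar 0 (left_mem_Icc.2 zero_le_one))
  have hgp : ∀ᵐ γ ∂lebI, g γ * p γ ≤ pbar := (ae_restrict_iff' measurableSet_Icc).2 <|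
    Eventually.of_forall fun γ hγ => (mul_le_of_le_one_left (hp0 γ) (hg1 γ hγ)).trans (hpbar γ hγ)
  calc ∫ γ, g γ * p γ ∂lebI ≤ η * ∫ γ, p γ ∂lebI + pbar * lebI.real Bᶜ :=
        integral_le_of_le_mul_on_of_ae_le hB
          (hp.integrable_mul hg fun γ hγ => abs_le.2 ⟨by linarith [hg0 γ], hg1 γ hγ⟩)
          hp.integrable (Eventually.of_forall hp0) hη
          (fun γ hγ => mul_le_mul_of_nonneg_right (hgB γ hγ) (hp0 γ)) hgp
    _ ≤ η + pbar * δ := by rw [hp1, mul_one]; gcongr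

end IsDensity

section Reweight

variable {ι : Type*}

noncomputable def reweight (s : Finset ι) (J : ι → ι → ℝ) (m q : ι → ℝ) (y : ι) : ℝ :=
  ∑ y' ∈ s, q y' / m y' * J y y'

variable [DecidableEq ι] {s : Finset ι} {J : ι → ι → ℝ} {m q : ι → ℝ} {y : ι}

theorem reweight_sub_eq (hy : y ∈ s) (hm : ∑ y' ∈ s, J y y' = m y)
    (hm0 : ∀ y ∈ s, m y ≠ 0) :
    reweight s J m q y - q y = (∑ y' ∈ s.erase y, J y y') / m y * (m y - q y)
      - ∑ y' ∈ s.erase y, J y y' * ((m y' - q y') / m y') := by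
  have hJyy : J y y = m y - ∑ y' ∈ s.erase y, J y y' := by
    rw [← hm, ← Finset.add_sum_erase s _ hy, add_sub_cancel_right]
  have herase : ∑ y' ∈ s.erase y, J y y' * ((m y' - q y') / m y')
      = ∑ y' ∈ s.erase y, J y y' - ∑ y' ∈ s.erase y, q y' / m y' * J y y' := by
    rw [← Finset.sum_sub_distrib]
    refine Finset.sum_congr rfl fun y' hy' => ?_
    field_simp [hm0 y' (Finset.mem_of_mem_erase hy')]
  rw [reweight, ← Finset.add_sum_erase s _ hy, hJyy, herase]
  field_simp [hm0 y hy]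
  ring

theorem sum_abs_reweight_sub_le (hJ : ∀ a b, J a b = J b a) (hJ0 : ∀ a b, 0 ≤ J a b)
    (hm : ∀ y ∈ s, ∑ y' ∈ s, J y y' = m y) (hm0 : ∀ y ∈ s, 0 < m y) :
    ∑ y ∈ s, |reweight s J m q y - q y|
      ≤ ∑ y ∈ s, 2 * (∑ y' ∈ s.erase y, J y y') / m y * |m y - q y| := by
  set S : ι → ℝ := fun y => ∑ y' ∈ s.erase y, J y y'
  set e : ι → ℝ := fun y => |m y - q y| / m y
  have hswap : ∑ y ∈ s, ∑ y' ∈ s.erase y, J y y' * e y' = ∑ y ∈ s, S y * e y := by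
    rw [Finset.sum_comm' (s' := fun y' => s.erase y') (t' := s)
      (fun _ _ => by simp only [Finset.mem_erase]; tauto)]
    simp only [S, Finset.sum_mul, hJ]
  calc ∑ y ∈ s, |reweight s J m q y - q y|
      ≤ ∑ y ∈ s, (S y * e y + ∑ y' ∈ s.erase y, J y y' * e y') := by
        refine Finset.sum_le_sum fun y hy => ?_
        rw [reweight_sub_eq hy (hm y hy) fun y hy => (hm0 y hy).ne']
        refine (abs_sub _ _).trans (add_le_add (le_of_eq ?_) ?_)
        · rw [abs_mul, abs_div, abs_of_nonneg (Finset.sum_nonneg fun _ _ => hJ0 _ _),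
            abs_of_pos (hm0 y hy), div_mul_eq_mul_div, mul_div_assoc]
        · refine (Finset.abs_sum_le_sum_abs _ _).trans (le_of_eq (Finset.sum_congr rfl
            fun y' hy' => ?_))
          rw [abs_mul, abs_div, abs_of_nonneg (hJ0 _ _),
            abs_of_pos (hm0 y' (Finset.mem_of_mem_erase hy'))]
    _ = ∑ y ∈ s, 2 * S y / m y * |m y - q y| := by
        rw [Finset.sum_add_distrib, hswap, ← Finset.sum_add_distrib]
        refine Finset.sum_congr rfl fun y _ => ?_
        simp only [e]
        ring

end Reweight

structure IsMeasurementKernel (N : ℕ) (pA : ℕ → ℝ → ℝ) : Prop where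
  measurable : ∀ y, Measurable (pA y)
  nonneg : ∀ y γ, 0 ≤ pA y γ
  sum_eq_one : ∀ γ ∈ Icc (0 : ℝ) 1, ∑ y ∈ Finset.range (N + 1), pA y γ = 1

noncomputable def overlap (pA : ℕ → ℝ → ℝ) (p : ℝ → ℝ) (a b : ℕ) : ℝ :=
  ∫ γ, pA a γ * pA b γ * p γ ∂lebI

noncomputable def crossProdSup (N : ℕ) (pA : ℕ → ℝ → ℝ) (B : Set ℝ) : ℝ :=
  sSup {x : ℝ | ∃ y ∈ Finset.range (N + 1), ∃ y' ∈ Finset.range (N + 1),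
    y ≠ y' ∧ ∃ γ ∈ B, x = pA y γ * pA y' γ}

noncomputable def crossSumSup (N : ℕ) (pA : ℕ → ℝ → ℝ) (B : Set ℝ) : ℝ :=
  sSup {x : ℝ | ∃ y ∈ Finset.range (N + 1), ∃ γ ∈ B,
    x = ∑ y' ∈ (Finset.range (N + 1)).erase y, pA y γ * pA y' γ}

theorem overlap_comm (pA : ℕ → ℝ → ℝ) (p : ℝ → ℝ) (a b : ℕ) :
    overlap pA p a b = overlap pA p b a := by
  simp only [overlap, mul_comm (pA a _)]

namespace IsMeasurementKernel

variable {N : ℕ} {pA : ℕ → ℝ → ℝ} {p : ℝ → ℝ} {B : Set ℝ} {y y' : ℕ} {γ : ℝ}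

theorem le_one (hK : IsMeasurementKernel N pA) (hy : y ∈ Finset.range (N + 1))
    (hγ : γ ∈ Icc (0 : ℝ) 1) : pA y γ ≤ 1 :=
  hK.sum_eq_one γ hγ ▸ Finset.single_le_sum (fun i _ => hK.nonneg i γ) hy

theorem sum_erase_mul_le_one (hK : IsMeasurementKernel N pA) (hy : y ∈ Finset.range (N + 1))
    (hγ : γ ∈ Icc (0 : ℝ) 1) :
    ∑ y' ∈ (Finset.range (N + 1)).erase y, pA y γ * pA y' γ ≤ 1 :=
  calc ∑ y' ∈ (Finset.range (N + 1)).erase y, pA y γ * pA y' γ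
      ≤ ∑ y' ∈ Finset.range (N + 1), pA y γ * pA y' γ :=
        Finset.sum_le_sum_of_subset_of_nonneg (Finset.erase_subset _ _)
          fun i _ _ => mul_nonneg (hK.nonneg y γ) (hK.nonneg i γ)
    _ = pA y γ := by rw [← Finset.mul_sum, hK.sum_eq_one γ hγ, mul_one]
    _ ≤ 1 := hK.le_one hy hγ

theorem integrable_mul_mul (hK : IsMeasurementKernel N pA) (hp : IsDensity p)
    (hy : y ∈ Finset.range (N + 1)) (hy' : y' ∈ Finset.range (N + 1)) :
    Integrable (fun γ => pA y γ * pA y' γ * p γ) lebI :=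
  hp.integrable_mul ((hK.measurable y).mul (hK.measurable y')) fun γ hγ => by
    rw [abs_of_nonneg (mul_nonneg (hK.nonneg y γ) (hK.nonneg y' γ))]
    exact mul_le_one₀ (hK.le_one hy hγ) (hK.nonneg y' γ) (hK.le_one hy' hγ)

theorem overlap_nonneg (hK : IsMeasurementKernel N pA) (hp : IsDensity p) (a b : ℕ) :
    0 ≤ overlap pA p a b :=
  integral_nonneg fun γ => mul_nonneg (mul_nonneg (hK.nonneg a γ) (hK.nonneg b γ)) (hp.2.1 γ)

theorem sum_overlap (hK : IsMeasurementKernel N pA) (hp : IsDensity p)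
    (hy : y ∈ Finset.range (N + 1)) :
    ∑ y' ∈ Finset.range (N + 1), overlap pA p y y' = marginD pA p y := by
  simp only [overlap]
  rw [← integral_finsetSum _ fun y' hy' => hK.integrable_mul_mul hp hy hy', marginD]
  refine integral_congr_ae ((ae_restrict_iff' measurableSet_Icc).2 (Eventually.of_forall
    fun γ hγ => ?_))
  dsimp only
  rw [← Finset.sum_mul, ← Finset.mul_sum, hK.sum_eq_one γ hγ, mul_one]

theorem marginD_npUpd0 (hK : IsMeasurementKernel N pA) (hp : IsDensity p) (phat : ℕ → ℝ)
    (hy : y ∈ Finset.range (N + 1)) :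
    marginD pA (npUpd0 N pA phat p) y
      = reweight (Finset.range (N + 1)) (overlap pA p) (marginD pA p) phat y := by
  have hterm : ∀ y' ∈ Finset.range (N + 1), Integrable
      (fun γ => pA y γ * (pA y' γ * phat y' * p γ / marginD pA p y')) lebI := fun y' hy' =>
    ((hK.integrable_mul_mul hp hy hy').const_mul (phat y' / marginD pA p y')).congr
      (Eventually.of_forall fun γ => by ring)
  rw [marginD]
  simp only [npUpd0, Finset.mul_sum]
  rw [integral_finsetSum _ hterm, reweight]
  refine Finset.sum_congr rfl fun y' _ => ?_
  rw [overlap, ← integral_const_mul]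
  congr 1 with γ
  ring

theorem mul_le_one (hK : IsMeasurementKernel N pA) (hy : y ∈ Finset.range (N + 1))
    (hy' : y' ∈ Finset.range (N + 1)) (hγ : γ ∈ Icc (0 : ℝ) 1) : pA y γ * pA y' γ ≤ 1 :=
  mul_le_one₀ (hK.le_one hy hγ) (hK.nonneg y' γ) (hK.le_one hy' hγ)

theorem crossProdSup_nonneg (hK : IsMeasurementKernel N pA) : 0 ≤ crossProdSup N pA B :=
  Real.sSup_nonneg <| by
    rintro _ ⟨y, -, y', -, -, γ, -, rfl⟩
    exact mul_nonneg (hK.nonneg y γ) (hK.nonneg y' γ)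

theorem mul_le_crossProdSup (hK : IsMeasurementKernel N pA) (hB : B ⊆ Icc 0 1)
    (hy : y ∈ Finset.range (N + 1)) (hy' : y' ∈ Finset.range (N + 1)) (hne : y ≠ y')
    (hγ : γ ∈ B) : pA y γ * pA y' γ ≤ crossProdSup N pA B := by
  refine le_csSup ⟨1, ?_⟩ ⟨y, hy, y', hy', hne, γ, hγ, rfl⟩
  rintro _ ⟨y, hy, y', hy', -, γ, hγ, rfl⟩
  exact hK.mul_le_one hy hy' (hB hγ)

theorem crossSumSup_nonneg (hK : IsMeasurementKernel N pA) : 0 ≤ crossSumSup N pA B :=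
  Real.sSup_nonneg <| by
    rintro _ ⟨y, -, γ, -, rfl⟩
    exact Finset.sum_nonneg fun y' _ => mul_nonneg (hK.nonneg y γ) (hK.nonneg y' γ)

theorem sum_erase_mul_le_crossSumSup (hK : IsMeasurementKernel N pA) (hB : B ⊆ Icc 0 1)
    (hy : y ∈ Finset.range (N + 1)) (hγ : γ ∈ B) :
    ∑ y' ∈ (Finset.range (N + 1)).erase y, pA y γ * pA y' γ ≤ crossSumSup N pA B := by
  refine le_csSup ⟨1, ?_⟩ ⟨y, hy, γ, hγ, rfl⟩
  rintro _ ⟨y, hy, γ, hγ, rfl⟩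
  exact hK.sum_erase_mul_le_one hy (hB hγ)

variable {pbar δ η : ℝ}

theorem overlap_le (hK : IsMeasurementKernel N pA) (hp : IsDensity p)
    (hpbar : ∀ γ ∈ Icc (0 : ℝ) 1, p γ ≤ pbar) (hB : MeasurableSet B) (hBc : lebI.real Bᶜ ≤ δ)
    (hy : y ∈ Finset.range (N + 1)) (hy' : y' ∈ Finset.range (N + 1))
    (hη : ∀ γ ∈ B, pA y γ * pA y' γ ≤ η) (hη0 : 0 ≤ η) :
    overlap pA p y y' ≤ η + pbar * δ :=
  hp.integral_mul_le hpbar hB hBc ((hK.measurable y).mul (hK.measurable y'))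
    (fun γ => mul_nonneg (hK.nonneg y γ) (hK.nonneg y' γ)) (fun _ hγ => hK.mul_le_one hy hy' hγ)
    hη hη0

theorem sum_erase_overlap_le (hK : IsMeasurementKernel N pA) (hp : IsDensity p)
    (hpbar : ∀ γ ∈ Icc (0 : ℝ) 1, p γ ≤ pbar) (hB : MeasurableSet B) (hBc : lebI.real Bᶜ ≤ δ)
    (hy : y ∈ Finset.range (N + 1))
    (hη : ∀ γ ∈ B, ∑ y' ∈ (Finset.range (N + 1)).erase y, pA y γ * pA y' γ ≤ η) (hη0 : 0 ≤ η) :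
    ∑ y' ∈ (Finset.range (N + 1)).erase y, overlap pA p y y' ≤ η + pbar * δ := by
  simp only [overlap]
  rw [← integral_finsetSum _ fun y' hy' =>
    hK.integrable_mul_mul hp hy (Finset.mem_of_mem_erase hy')]
  simp only [← Finset.sum_mul]
  exact hp.integral_mul_le hpbar hB hBc
    (Finset.measurable_sum _ fun y' _ => (hK.measurable y).mul (hK.measurable y'))
    (fun γ => Finset.sum_nonneg fun y' _ => mul_nonneg (hK.nonneg y γ) (hK.nonneg y' γ))
    (fun _ hγ => hK.sum_erase_mul_le_one hy hγ) hη hη0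

theorem sum_erase_overlap_le_marginD (hK : IsMeasurementKernel N pA) (hp : IsDensity p)
    (hy : y ∈ Finset.range (N + 1)) :
    ∑ y' ∈ (Finset.range (N + 1)).erase y, overlap pA p y y' ≤ marginD pA p y :=
  (Finset.sum_le_sum_of_subset_of_nonneg (Finset.erase_subset _ _)
    fun _ _ _ => hK.overlap_nonneg hp _ _).trans_eq (hK.sum_overlap hp hy)

theorem two_mul_sum_erase_overlap_le (hK : IsMeasurementKernel N pA) (hp : IsDensity p)
    (hpbar : ∀ γ ∈ Icc (0 : ℝ) 1, p γ ≤ pbar) (hB : B ⊆ Icc 0 1) (hBm : MeasurableSet B)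
    (hBc : lebI.real Bᶜ ≤ δ) (hy : y ∈ Finset.range (N + 1)) :
    2 * ∑ y' ∈ (Finset.range (N + 1)).erase y, overlap pA p y y'
      ≤ (N + 1) * (crossProdSup N pA B + pbar * δ) + crossSumSup N pA B + pbar * δ := by
  have hpair : ∑ y' ∈ (Finset.range (N + 1)).erase y, overlap pA p y y'
      ≤ N * (crossProdSup N pA B + pbar * δ) := by
    have h := Finset.sum_le_card_nsmul _ _ _ fun y' hy' =>
      hK.overlap_le hp hpbar hBm hBc hy (Finset.mem_of_mem_erase hy')
        (fun γ hγ => hK.mul_le_crossProdSup hB hy (Finset.mem_of_mem_erase hy')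
          (Finset.ne_of_mem_erase hy').symm hγ) hK.crossProdSup_nonneg
    rwa [Finset.card_erase_of_mem hy, Finset.card_range, Nat.add_sub_cancel,
      nsmul_eq_mul] at h
  have hrow := hK.sum_erase_overlap_le hp hpbar hBm hBc hy
    (fun γ hγ => hK.sum_erase_mul_le_crossSumSup hB hy hγ) hK.crossSumSup_nonneg
  have hpbar0 : 0 ≤ pbar := (hp.2.1 0).trans (hpbar 0 (left_mem_Icc.2 zero_le_one))
  have hpair0 : 0 ≤ crossProdSup N pA B + pbar * δ :=
    add_nonneg hK.crossProdSup_nonneg (mul_nonneg hpbar0 (measureReal_nonneg.trans hBc))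
  nlinarith

end IsMeasurementKernel

theorem div_le_add_div_of_sub_le {S m c E : ℝ} (hS : 0 ≤ S) (hSm : S ≤ m) (hE : 0 ≤ E)
    (hc : 0 < c) (hm : c - E ≤ m) (hm0 : 0 < m) : S / m ≤ (S + E) / c := by
  rw [div_le_div_iff₀ hm0 hc]
  nlinarith [mul_le_mul_of_nonneg_left hm hS, mul_le_mul_of_nonneg_left hSm hE]

theorem two_mul_div_le_oracle_coeff {S m c E K ε : ℝ} (hS : 0 ≤ S) (hSm : S ≤ m) (hE : 0 ≤ E)
    (hc : 0 < c) (hm : c - E ≤ m) (hm0 : 0 < m) (hK : 2 * S ≤ K) (hε0 : 0 ≤ ε) (hε1 : ε < 1) :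
    2 * S / m ≤ K / c + (1 + 1 / (1 - ε)) * E / c + 1 / (1 - ε) * E ^ 2 / c ^ 2 := by
  have hε : 1 ≤ 1 / (1 - ε) := by rw [le_div_iff₀ (by linarith)]; linarith
  calc 2 * S / m = 2 * (S / m) := mul_div_assoc _ _ _
    _ ≤ 2 * ((S + E) / c) :=
          mul_le_mul_of_nonneg_left (div_le_add_div_of_sub_le hS hSm hE hc hm hm0) zero_le_two
    _ ≤ K / c + (1 + 1 / (1 - ε)) * E / c := by
        rw [← add_div, mul_div_assoc']
        gcongr
        nlinarith
    _ ≤ _ := le_add_of_nonneg_right (by positivity)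

theorem npem_oracle_inequality_general
    (N : ℕ) (pA : ℕ → ℝ → ℝ) (phat : ℕ → ℝ)
    (hpAmeas : ∀ y, Measurable (pA y)) (hpAnonneg : ∀ y γ, 0 ≤ pA y γ)
    (hpAsum : ∀ γ ∈ Set.Icc (0:ℝ) 1, ∑ y ∈ Finset.range (N + 1), pA y γ = 1)
    -- `c₀ = min_y p̂(y) > 0`
    (c0 : ℝ) (hc0def : c0 = (Finset.range (N + 1)).inf' Finset.nonempty_range_add_one phat)
    (hc0pos : 0 < c0)
    (ε δ : ℝ) (hε0 : 0 < ε) (hε1 : ε < 1) (hδ0 : 0 < δ)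
    (B : Set ℝ) (hB : B ⊆ Set.Icc (0:ℝ) 1) (hBmeas : MeasurableSet B)
    (hBc : volume (Set.Icc (0:ℝ) 1 \ B) ≤ ENNReal.ofReal δ)
    (η₁ η₂ : ℝ)
    (hη₁ : η₁ = sSup {x : ℝ | ∃ y ∈ Finset.range (N + 1), ∃ y' ∈ Finset.range (N + 1),
      y ≠ y' ∧ ∃ γ ∈ B, x = pA y γ * pA y' γ})
    (hη₂ : η₂ = sSup {x : ℝ | ∃ y ∈ Finset.range (N + 1), ∃ γ ∈ B,
      x = ∑ y' ∈ (Finset.range (N + 1)).erase y, pA y γ * pA y' γ})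
    -- the current iterate, a density with finite supremum `p̄⁽ᵗ⁾`
    (p : ℝ → ℝ) (hp : IsDensity p)
    (pbar : ℝ) (hpbarBdd : BddAbove (p '' Set.Icc (0:ℝ) 1))
    (hpbar : pbar = sSup (p '' Set.Icc (0:ℝ) 1))
    (hclose : ∑ y ∈ Finset.range (N + 1), |marginD pA p y - phat y| ≤ ε * c0) :
    ∑ y ∈ Finset.range (N + 1), |marginD pA (npUpd0 N pA phat p) y - phat y|
      ≤ ((N + 1) * (η₁ + pbar * δ) / c0 + η₂ / c0 + pbar * δ / c0
          + (1 + 1 / (1 - ε)) * (∑ y ∈ Finset.range (N + 1), |marginD pA p y - phat y|) / c0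
          + (1 / (1 - ε)) * (∑ y ∈ Finset.range (N + 1), |marginD pA p y - phat y|) ^ 2 / c0 ^ 2)
        * ∑ y ∈ Finset.range (N + 1), |marginD pA p y - phat y| := by
  have hK : IsMeasurementKernel N pA := ⟨hpAmeas, hpAnonneg, hpAsum⟩
  have hpbar_le : ∀ γ ∈ Icc (0 : ℝ) 1, p γ ≤ pbar := fun γ hγ =>
    hpbar ▸ le_csSup hpbarBdd ⟨γ, hγ, rfl⟩
  obtain rfl : η₁ = crossProdSup N pA B := hη₁
  obtain rfl : η₂ = crossSumSup N pA B := hη₂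
  set r := Finset.range (N + 1)
  set E := ∑ y ∈ r, |marginD pA p y - phat y|
  have hE : 0 ≤ E := Finset.sum_nonneg fun _ _ => abs_nonneg _
  have hm : ∀ y ∈ r, c0 - E ≤ marginD pA p y := fun y hy => by
    have hdev := (abs_sub_le_iff.1 (Finset.single_le_sum
      (f := fun y => |marginD pA p y - phat y|) (fun _ _ => abs_nonneg _) hy)).2
    have hc0 : c0 ≤ phat y := hc0def ▸ Finset.inf'_le phat hy
    linarith
  have hm0 : ∀ y ∈ r, 0 < marginD pA p y := fun y hy => by nlinarith [hm y hy]
  calc ∑ y ∈ r, |marginD pA (npUpd0 N pA phat p) y - phat y|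
      = ∑ y ∈ r, |reweight r (overlap pA p) (marginD pA p) phat y - phat y| :=
        Finset.sum_congr rfl fun y hy => by rw [hK.marginD_npUpd0 hp phat hy]
    _ ≤ ∑ y ∈ r, 2 * (∑ y' ∈ r.erase y, overlap pA p y y') / marginD pA p y
          * |marginD pA p y - phat y| :=
        sum_abs_reweight_sub_le (overlap_comm pA p) (hK.overlap_nonneg hp)
          (fun y hy => hK.sum_overlap hp hy) hm0
    _ ≤ _ := by
        rw [Finset.mul_sum]
        refine Finset.sum_le_sum fun y hy => mul_le_mul_of_nonneg_right ?_ (abs_nonneg _)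
        refine (two_mul_div_le_oracle_coeff
          (Finset.sum_nonneg fun _ _ => hK.overlap_nonneg hp _ _)
          (hK.sum_erase_overlap_le_marginD hp hy) hE hc0pos (hm y hy) (hm0 y hy)
          (hK.two_mul_sum_erase_overlap_le hp hpbar_le hB hBmeas
            (lebI_real_compl_le hBmeas hδ0.le hBc) hy) hε0.le hε1).trans_eq ?_
        ring

/-- **Lemma (one-step oracle inequality for the NPEM update).**
If `‖p^(t)_MA − p̂‖₁ ≤ ε·c₀`, then the unregularized NPEM update satisfies
`‖p^(t+1)_MA − p̂‖₁ ≤ ((N+1)(η₁ + p̄δ)/c₀ + η₂/c₀ + p̄δ/c₀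
  + (1 + 1/(1−ε))·‖p^(t)_MA − p̂‖₁/c₀ + (1/(1−ε))·‖p^(t)_MA − p̂‖₁²/c₀²)·‖p^(t)_MA − p̂‖₁`. -/
theorem npem_oracle_inequality
    (N : ℕ) (pA : ℕ → ℝ → ℝ) (phat : ℕ → ℝ)
    (hpAmeas : ∀ y, Measurable (pA y)) (hpAnonneg : ∀ y γ, 0 ≤ pA y γ)
    (hpAsum : ∀ γ ∈ Set.Icc (0:ℝ) 1, ∑ y ∈ Finset.range (N + 1), pA y γ = 1)
    (hphat1 : ∑ y ∈ Finset.range (N + 1), phat y = 1) (hphatnn : ∀ y, 0 ≤ phat y)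
    -- `c₀ = min_y p̂(y) > 0`
    (c0 : ℝ) (hc0def : c0 = (Finset.range (N + 1)).inf' Finset.nonempty_range_add_one phat)
    (hc0pos : 0 < c0)
    (ε δ : ℝ) (hε0 : 0 < ε) (hε1 : ε < 1) (hδ0 : 0 < δ)
    (B : Set ℝ) (hB : B ⊆ Set.Icc (0:ℝ) 1) (hBmeas : MeasurableSet B)
    (hBc : volume (Set.Icc (0:ℝ) 1 \ B) ≤ ENNReal.ofReal δ)
    (η₁ η₂ : ℝ)
    (hη₁ : η₁ = sSup {x : ℝ | ∃ y ∈ Finset.range (N + 1), ∃ y' ∈ Finset.range (N + 1),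
      y ≠ y' ∧ ∃ γ ∈ B, x = pA y γ * pA y' γ})
    (hη₂ : η₂ = sSup {x : ℝ | ∃ y ∈ Finset.range (N + 1), ∃ γ ∈ B,
      x = ∑ y' ∈ (Finset.range (N + 1)).erase y, pA y γ * pA y' γ})
    -- the current iterate, a density with finite supremum `p̄⁽ᵗ⁾`
    (p : ℝ → ℝ) (hp : IsDensity p)
    (pbar : ℝ) (hpbarBdd : BddAbove (p '' Set.Icc (0:ℝ) 1))
    (hpbar : pbar = sSup (p '' Set.Icc (0:ℝ) 1))
    (hclose : ∑ y ∈ Finset.range (N + 1), |marginD pA p y - phat y| ≤ ε * c0) :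
    ∑ y ∈ Finset.range (N + 1), |marginD pA (npUpd0 N pA phat p) y - phat y|
      ≤ ((N + 1) * (η₁ + pbar * δ) / c0 + η₂ / c0 + pbar * δ / c0
          + (1 + 1 / (1 - ε)) * (∑ y ∈ Finset.range (N + 1), |marginD pA p y - phat y|) / c0
          + (1 / (1 - ε)) * (∑ y ∈ Finset.range (N + 1), |marginD pA p y - phat y|) ^ 2 / c0 ^ 2)
        * ∑ y ∈ Finset.range (N + 1), |marginD pA p y - phat y| :=
  npem_oracle_inequality_general N pA phat hpAmeas hpAnonneg hpAsum c0 hc0def hc0pos ε δ hε0 hε1 hδ0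
    B hB hBmeas hBc η₁ η₂ hη₁ hη₂ p hp pbar hpbarBdd hpbar hclose
end

section
/- Fix μ > 0. Let P and P̃ be probability measures on [0,1] with Lebesgue densities p and p̃, such that ess inf_{γ∈[0,1]} p(γ) > 0, the marginal p_MA(y) = ∫₀¹ p_A(y|γ) p(γ) dγ satisfies p_MA(y) > 0 whenever p̂(y) > 0, and ∫₀¹ p̃(γ)/p(γ) dγ < ∞. Then the one-sided directional (Gâteaux) derivative of ℓ_μ at P in the direction P̃ − P exists and equals lim_{t→0⁺} (ℓ_μ[P + t(P̃−P)] − ℓ_μ[P])/t = ∑_{y=0}^N p̂(y)·p_A(y;P̃)/p_MA(y) + μ·∫₀¹ (p̃(γ)/p(γ)) dγ − 1 − μ, where p_A(y;P̃) = ∫₀¹ p_A(y|γ) p̃(γ) dγ. -/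
open MeasureTheory Set Filter Topology
open scoped Classical

/-- A probability measure concentrated on `[0,1]`. -/
def IsProbOn (P : Measure ℝ) : Prop := IsProbabilityMeasure P ∧ P (Set.Icc (0:ℝ) 1)ᶜ = 0

/-- The measure on `[0,1]` with Lebesgue density `f`. -/
noncomputable def densM (f : ℝ → ℝ) : Measure ℝ :=
  lebI.withDensity fun γ => ENNReal.ofReal (f γ)

/-- Kullback–Leibler divergence `D(ν‖ρ)`, valued in `EReal`: it equals
`∫ log (dν/dρ) dν` when `ν ≪ ρ` and the log-likelihood ratio is `ν`-integrable,
and `+∞` otherwise. -/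
noncomputable def KLdiv (ν ρ : Measure ℝ) : EReal :=
  if ν ≪ ρ ∧ Integrable (fun x => Real.log ((ν.rnDeriv ρ x).toReal)) ν
  then ((∫ x, Real.log ((ν.rnDeriv ρ x).toReal) ∂ν : ℝ) : EReal)
  else ⊤

/-- Implied marginal `p_MA(y) = ∫ p_A(y|γ) dP_M(γ)`. -/
noncomputable def margin (pA : ℕ → ℝ → ℝ) (P : Measure ℝ) (y : ℕ) : ℝ := ∫ γ, pA y γ ∂P

/-- Mixture log-likelihood `ℓ[P_M] = ∑_y p̂(y) log p_MA(y)`, valued in `EReal`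
(it is `−∞` when some `y` with `p̂(y) > 0` has zero implied marginal mass). -/
noncomputable def loglik (N : ℕ) (pA : ℕ → ℝ → ℝ) (phat : ℕ → ℝ) (P : Measure ℝ) : EReal :=
  if ∀ y ∈ Finset.range (N + 1), 0 < phat y → 0 < margin pA P y
  then ((∑ y ∈ Finset.range (N + 1), phat y * Real.log (margin pA P y) : ℝ) : EReal)
  else ⊥

/-- Regularized log-likelihood `ℓ_μ[P_M] = ℓ[P_M] − μ·D(P_U‖P_M)`. -/
noncomputable def regLoglik (N : ℕ) (pA : ℕ → ℝ → ℝ) (phat : ℕ → ℝ) (μ : ℝ)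
    (P : Measure ℝ) : EReal :=
  loglik N pA phat P - (μ : EReal) * KLdiv lebI P

/-
Along the segment `P_t = (1 - t) P + t P̃` everything stays explicit: `P_t` has density
`q_t = (1 - t) p + t p̃ ≥ (1 - t) ess inf p > 0`, so `D(P_U‖P_t) = -∫ log q_t` is finite, and
each marginal is affine in `t`. The data term is a finite sum of logarithms of affine functions
of `t`, differentiated termwise. For the divergence term, `log q_t - log p = log (1 - t + t p̃/p)`
is bounded by `2 t (p̃/p + 1)` for `t ≤ 1/2`, so the integrability of `p̃/p` lets dominated
convergence pass the limit `t → 0⁺` under the integral.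
-/

open Finset
open scoped ENNReal

lemma tendsto_log_lineMap_sub_log_div {a : ℝ} (b : ℝ) (ha : a ≠ 0) :
    Tendsto (fun t => (Real.log ((1 - t) * a + t * b) - Real.log a) / t) (𝓝[>] 0)
      (𝓝 ((b - a) / a)) := by
  have hline : HasDerivAt (fun t : ℝ => (1 - t) * a + t * b) (b - a) 0 := by
    have h := ((hasDerivAt_id (0:ℝ)).const_mul (b - a)).const_add a
    rw [mul_one] at h
    exact h.congr_of_eventuallyEq (Eventually.of_forall fun t => by simp only [id]; ring)
  simpa [div_eq_inv_mul] using (hline.log (by simpa using ha)).tendsto_slope_zero_right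

lemma tendsto_sum_log_lineMap_sub_div {ι : Type*} (s : Finset ι) (w a b : ι → ℝ)
    (ha : ∀ i ∈ s, w i ≠ 0 → a i ≠ 0) :
    Tendsto (fun t => ((∑ i ∈ s, w i * Real.log ((1 - t) * a i + t * b i))
        - ∑ i ∈ s, w i * Real.log (a i)) / t) (𝓝[>] 0)
      (𝓝 (∑ i ∈ s, w i * ((b i - a i) / a i))) := by
  have hterm : ∀ i ∈ s, Tendsto (fun t => w i * ((Real.log ((1 - t) * a i + t * b i)
      - Real.log (a i)) / t)) (𝓝[>] 0) (𝓝 (w i * ((b i - a i) / a i))) := by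
    intro i hi
    by_cases hw : w i = 0
    · simp [hw]
    · exact (tendsto_log_lineMap_sub_log_div (b i) (ha i hi hw)).const_mul (w i)
  refine (tendsto_finsetSum s hterm).congr fun t => ?_
  rw [← sum_sub_distrib, sum_div]
  exact sum_congr rfl fun i _ => by ring

lemma sum_mul_sub_div_self {ι : Type*} (s : Finset ι) (w a b : ι → ℝ)
    (ha : ∀ i ∈ s, w i ≠ 0 → a i ≠ 0) :
    ∑ i ∈ s, w i * ((b i - a i) / a i) = ∑ i ∈ s, w i * b i / a i - ∑ i ∈ s, w i := by
  rw [← sum_sub_distrib]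
  refine sum_congr rfl fun i hi => ?_
  by_cases hw : w i = 0
  · simp [hw]
  · field_simp [ha i hi hw]

lemma abs_log_lineMap_sub_log_le {t a b : ℝ} (ht : 0 < t) (ht2 : t ≤ 1 / 2) (ha : 0 < a)
    (hb : 0 ≤ b) : |Real.log ((1 - t) * a + t * b) - Real.log a| ≤ 2 * t * (b / a + 1) := by
  set s := 1 - t + t * (b / a) with hs_def
  have hs : 1 / 2 ≤ s := by nlinarith [div_nonneg hb ha.le]
  have hs0 : 0 < s := by linarith
  have hlog : Real.log ((1 - t) * a + t * b) - Real.log a = Real.log s := by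
    rw [show (1 - t) * a + t * b = a * s by rw [hs_def]; field_simp, Real.log_mul ha.ne' hs0.ne',
      add_sub_cancel_left]
  rw [hlog, abs_le]
  constructor
  · have hinv : s⁻¹ - 1 ≤ 2 * t := by
      rw [sub_le_iff_le_add, inv_le_iff_one_le_mul₀ hs0]
      nlinarith [div_nonneg hb ha.le]
    nlinarith [Real.one_sub_inv_le_log_of_pos hs0, mul_nonneg ht.le (div_nonneg hb ha.le)]
  · nlinarith [Real.log_le_sub_one_of_pos hs0, div_nonneg hb ha.le]

section FiniteMeasure

variable {α : Type*} [MeasurableSpace α] {ν : Measure α} [IsFiniteMeasure ν]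

lemma integrable_log_of_le {q : α → ℝ} (hq : Measurable q) (hqi : Integrable q ν) {c : ℝ}
    (hc : 0 < c) (hcq : ∀ᵐ x ∂ν, c ≤ q x) : Integrable (fun x => Real.log (q x)) ν := by
  refine Integrable.mono' (g := fun x => |Real.log c| + q x) ((integrable_const _).add hqi)
    hq.log.aestronglyMeasurable ?_
  filter_upwards [hcq] with x hx
  have hqx : 0 < q x := hc.trans_le hx
  rw [Real.norm_eq_abs, abs_le]
  constructor
  · linarith [Real.log_le_log hc hx, neg_abs_le (Real.log c)]
  · linarith [Real.log_le_sub_one_of_pos hqx, abs_nonneg (Real.log c)]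

lemma tendsto_integral_log_lineMap_sub_div {p ptil : α → ℝ} (hp : Measurable p)
    (hptil : Measurable ptil)
    (hp0 : ∀ᵐ x ∂ν, 0 < p x) (hptil0 : ∀ᵐ x ∂ν, 0 ≤ ptil x)
    (hlogp : Integrable (fun x => Real.log (p x)) ν)
    (hratio : Integrable (fun x => ptil x / p x) ν) :
    Tendsto (fun t => ((∫ x, Real.log ((1 - t) * p x + t * ptil x) ∂ν)
        - ∫ x, Real.log (p x) ∂ν) / t) (𝓝[>] 0) (𝓝 (∫ x, (ptil x / p x - 1) ∂ν)) := by
  have hmeas : ∀ t : ℝ, Measurable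
      (fun x => Real.log ((1 - t) * p x + t * ptil x) - Real.log (p x)) := fun t =>
    ((hp.const_mul _).add (hptil.const_mul _)).log.sub hp.log
  have hbound : ∀ t ∈ Set.Ioc (0:ℝ) (1 / 2), ∀ᵐ x ∂ν,
      |Real.log ((1 - t) * p x + t * ptil x) - Real.log (p x)| ≤ 2 * t * (ptil x / p x + 1) :=
    fun t ht => by
      filter_upwards [hp0, hptil0] with x hx hx'
      exact abs_log_lineMap_sub_log_le ht.1 ht.2 hx hx'
  have hdom : Integrable (fun x => 2 * (ptil x / p x + 1)) ν :=
    (hratio.add (integrable_const 1)).const_mul 2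
  have hwindow : Set.Ioc (0:ℝ) (1 / 2) ∈ 𝓝[>] 0 := Ioc_mem_nhdsGT (by norm_num)
  have hdct : Tendsto (fun t => ∫ x, (Real.log ((1 - t) * p x + t * ptil x)
      - Real.log (p x)) / t ∂ν) (𝓝[>] 0) (𝓝 (∫ x, (ptil x / p x - 1) ∂ν)) :=
    tendsto_integral_filter_of_dominated_convergence (fun x => 2 * (ptil x / p x + 1))
    (Eventually.of_forall fun t => ((hmeas t).div_const t).aestronglyMeasurable)
    (eventually_of_mem hwindow fun t ht => (hbound t ht).mono fun x hx => by
      rw [Real.norm_eq_abs, abs_div, abs_of_pos ht.1, div_le_iff₀ ht.1]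
      linarith)
    hdom
    (hp0.mono fun x hx => by
      have h := tendsto_log_lineMap_sub_log_div (ptil x) hx.ne'
      rwa [sub_div, div_self hx.ne'] at h)
  refine hdct.congr' (eventually_of_mem hwindow fun t ht => ?_)
  have hdiff : Integrable
      (fun x => Real.log ((1 - t) * p x + t * ptil x) - Real.log (p x)) ν :=
    (hdom.const_mul t).mono' (hmeas t).aestronglyMeasurable ((hbound t ht).mono fun x hx => by
      rw [Real.norm_eq_abs]; linarith)
  have hlogq : Integrable (fun x => Real.log ((1 - t) * p x + t * ptil x)) ν := by
    simpa only [Pi.add_def, sub_add_cancel] using hdiff.add hlogp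
  rw [integral_div, integral_sub hlogq hlogp]

end FiniteMeasure

instance isProbabilityMeasure_lebI : IsProbabilityMeasure lebI := by
  constructor
  rw [lebI, Measure.restrict_apply_univ, Real.volume_Icc]
  norm_num

lemma IsDensity.integrable_s13 {f : ℝ → ℝ} (hf : IsDensity f) : Integrable f lebI :=
  integrable_of_integral_eq_one hf.2.2

lemma integral_densM {f : ℝ → ℝ} (hf : Measurable f) (hf0 : ∀ γ, 0 ≤ f γ) (g : ℝ → ℝ) :
    ∫ γ, g γ ∂densM f = ∫ γ, g γ * f γ ∂lebI := by
  rw [densM, integral_withDensity_eq_integral_toReal_smul hf.ennreal_ofReal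
    (ae_of_all _ fun _ => ENNReal.ofReal_lt_top)]
  simp [ENNReal.toReal_ofReal (hf0 _), mul_comm]

lemma smul_densM_add_smul_densM {f g : ℝ → ℝ} (hf : Measurable f) (hg : Measurable g)
    (hf0 : ∀ γ, 0 ≤ f γ) (hg0 : ∀ γ, 0 ≤ g γ) {a b : ℝ} (ha : 0 ≤ a) (hb : 0 ≤ b) :
    ENNReal.ofReal a • densM f + ENNReal.ofReal b • densM g
      = densM fun γ => a * f γ + b * g γ := by
  have hdens : (fun γ => ENNReal.ofReal (a * f γ + b * g γ))
      = (ENNReal.ofReal a • fun γ => ENNReal.ofReal (f γ))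
        + (ENNReal.ofReal b • fun γ => ENNReal.ofReal (g γ)) := by
    funext γ
    simp only [Pi.add_apply, Pi.smul_apply, smul_eq_mul]
    rw [ENNReal.ofReal_add (mul_nonneg ha (hf0 γ)) (mul_nonneg hb (hg0 γ)),
      ENNReal.ofReal_mul ha, ENNReal.ofReal_mul hb]
  rw [densM, densM, densM, hdens, withDensity_add_left (hf.ennreal_ofReal.const_smul _),
    withDensity_smul _ hf.ennreal_ofReal, withDensity_smul _ hg.ennreal_ofReal]

lemma KLdiv_withDensity_ofReal {ν : Measure ℝ} [IsFiniteMeasure ν] {q : ℝ → ℝ}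
    (hq : Measurable q) (hqi : Integrable q ν) {c : ℝ} (hc : 0 < c) (hcq : ∀ᵐ x ∂ν, c ≤ q x) :
    KLdiv ν (ν.withDensity fun x => ENNReal.ofReal (q x))
      = ((-∫ x, Real.log (q x) ∂ν : ℝ) : EReal) := by
  have hq0 : ∀ᵐ x ∂ν, ENNReal.ofReal (q x) ≠ 0 := by
    filter_upwards [hcq] with x hx
    simpa using hc.trans_le hx
  have hlog : (fun x => Real.log
        ((ν.rnDeriv (ν.withDensity fun x => ENNReal.ofReal (q x)) x).toReal))
      =ᵐ[ν] fun x => -Real.log (q x) := by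
    filter_upwards [Measure.rnDeriv_withDensity_right ν ν hq.ennreal_ofReal.aemeasurable hq0
      (ae_of_all _ fun _ => ENNReal.ofReal_ne_top), Measure.rnDeriv_self ν, hcq] with x h h1 hx
    rw [h, h1, mul_one, ENNReal.toReal_inv, ENNReal.toReal_ofReal (hc.le.trans hx),
      Real.log_inv]
  rw [KLdiv, if_pos ⟨withDensity_absolutelyContinuous' hq.ennreal_ofReal.aemeasurable hq0,
    (integrable_log_of_le hq hqi hc hcq).neg.congr hlog.symm⟩, integral_congr_ae hlog,
    integral_neg]

lemma regLoglik_densM (N : ℕ) (pA : ℕ → ℝ → ℝ) (phat : ℕ → ℝ) (μ : ℝ) {q : ℝ → ℝ}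
    (hq : Measurable q) (hq0 : ∀ γ, 0 ≤ q γ) (hqi : Integrable q lebI) {c : ℝ} (hc : 0 < c)
    (hcq : ∀ᵐ γ ∂lebI, c ≤ q γ)
    (hmarg : ∀ y ∈ range (N + 1), 0 < phat y → 0 < ∫ γ, pA y γ * q γ ∂lebI) :
    regLoglik N pA phat μ (densM q)
      = (((∑ y ∈ range (N + 1), phat y * Real.log (∫ γ, pA y γ * q γ ∂lebI))
          + μ * ∫ γ, Real.log (q γ) ∂lebI : ℝ) : EReal) := by
  have hmargin : margin pA (densM q) = fun y => ∫ γ, pA y γ * q γ ∂lebI :=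
    funext fun y => integral_densM hq hq0 (pA y)
  rw [regLoglik, loglik, hmargin, if_pos hmarg, densM, KLdiv_withDensity_ofReal hq hqi hc hcq,
    ← EReal.coe_mul, ← EReal.coe_sub, mul_neg, sub_neg_eq_add]

section Mixture

variable {N : ℕ} {pA : ℕ → ℝ → ℝ}

lemma integrable_kernel_mul (hpAmeas : ∀ y, Measurable (pA y)) (hpAnonneg : ∀ y γ, 0 ≤ pA y γ)
    (hpAsum : ∀ γ ∈ Set.Icc (0:ℝ) 1, ∑ y ∈ range (N + 1), pA y γ = 1) {y : ℕ}
    (hy : y ∈ range (N + 1)) {f : ℝ → ℝ} (hf : Integrable f lebI) :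
    Integrable (fun γ => pA y γ * f γ) lebI := by
  refine hf.bdd_mul (c := 1) (hpAmeas y).aestronglyMeasurable ?_
  filter_upwards [ae_restrict_mem measurableSet_Icc] with γ hγ
  rw [Real.norm_eq_abs, abs_of_nonneg (hpAnonneg y γ), ← hpAsum γ hγ]
  exact single_le_sum (fun i _ => hpAnonneg i γ) hy

lemma toReal_regLoglik_lineMap (phat : ℕ → ℝ) (μ : ℝ) {p ptil : ℝ → ℝ}
    (hpAmeas : ∀ y, Measurable (pA y)) (hpAnonneg : ∀ y γ, 0 ≤ pA y γ)
    (hpAsum : ∀ γ ∈ Set.Icc (0:ℝ) 1, ∑ y ∈ range (N + 1), pA y γ = 1)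
    (hp : IsDensity p) (hptil : IsDensity ptil) {c : ℝ} (hc : 0 < c)
    (hcp : ∀ᵐ γ ∂lebI, c ≤ p γ)
    (hmarg : ∀ y ∈ range (N + 1), 0 < phat y → 0 < ∫ γ, pA y γ * p γ ∂lebI)
    {t : ℝ} (ht0 : 0 ≤ t) (ht1 : t < 1) :
    (regLoglik N pA phat μ
        (ENNReal.ofReal (1 - t) • densM p + ENNReal.ofReal t • densM ptil)).toReal
      = (∑ y ∈ range (N + 1), phat y *
            Real.log ((1 - t) * (∫ γ, pA y γ * p γ ∂lebI) + t * ∫ γ, pA y γ * ptil γ ∂lebI))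
        + μ * ∫ γ, Real.log ((1 - t) * p γ + t * ptil γ) ∂lebI := by
  have h1t : 0 < 1 - t := sub_pos.2 ht1
  have hmargin : ∀ y ∈ range (N + 1), ∫ γ, pA y γ * ((1 - t) * p γ + t * ptil γ) ∂lebI
      = (1 - t) * (∫ γ, pA y γ * p γ ∂lebI) + t * ∫ γ, pA y γ * ptil γ ∂lebI := by
    intro y hy
    have hI : ∀ {f}, IsDensity f → Integrable (fun γ => pA y γ * f γ) lebI :=
      fun hf => integrable_kernel_mul hpAmeas hpAnonneg hpAsum hy hf.integrable_s13
    simp_rw [mul_add, mul_left_comm (pA y _)]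
    rw [integral_add ((hI hp).const_mul _) ((hI hptil).const_mul _), integral_const_mul,
      integral_const_mul]
  have hcq : ∀ᵐ γ ∂lebI, (1 - t) * c ≤ (1 - t) * p γ + t * ptil γ := by
    filter_upwards [hcp] with γ hγ
    nlinarith [hptil.2.1 γ]
  rw [smul_densM_add_smul_densM hp.1 hptil.1 hp.2.1 hptil.2.1 h1t.le ht0,
    regLoglik_densM N pA phat μ (q := fun γ => (1 - t) * p γ + t * ptil γ)
      ((hp.1.const_mul _).add (hptil.1.const_mul _))
      (fun γ => by nlinarith [hp.2.1 γ, hptil.2.1 γ])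
      ((hp.integrable_s13.const_mul _).add (hptil.integrable_s13.const_mul _)) (mul_pos h1t hc) hcq,
    EReal.toReal_coe]
  · rw [sum_congr rfl fun y hy => by rw [hmargin y hy]]
  · intro y hy hy0
    rw [hmargin y hy]
    have hb : 0 ≤ ∫ γ, pA y γ * ptil γ ∂lebI :=
      integral_nonneg fun γ => mul_nonneg (hpAnonneg y γ) (hptil.2.1 γ)
    nlinarith [hmarg y hy hy0]

end Mixture

theorem gateaux_derivative_ac_direction_general
    (N : ℕ) (pA : ℕ → ℝ → ℝ) (phat : ℕ → ℝ)
    (hpAmeas : ∀ y, Measurable (pA y)) (hpAnonneg : ∀ y γ, 0 ≤ pA y γ)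
    (hpAsum : ∀ γ ∈ Set.Icc (0:ℝ) 1, ∑ y ∈ Finset.range (N + 1), pA y γ = 1)
    (hphat : ∀ y, 0 ≤ phat y) (hphat1 : ∑ y ∈ Finset.range (N + 1), phat y = 1)
    (μ : ℝ)
    (p ptil : ℝ → ℝ) (hp : IsDensity p) (hptil : IsDensity ptil)
    -- `ess inf_{γ∈[0,1]} p(γ) > 0`
    (hinf : ∃ c : ℝ, 0 < c ∧ lebI {γ : ℝ | p γ < c} = 0)
    (hmarg : ∀ y ∈ Finset.range (N + 1), 0 < phat y → 0 < ∫ γ, pA y γ * p γ ∂lebI)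
    -- `∫₀¹ p̃/p < ∞`
    (hratio : Integrable (fun γ => ptil γ / p γ) lebI) :
    Tendsto
      (fun t : ℝ =>
        ((regLoglik N pA phat μ
              (ENNReal.ofReal (1 - t) • densM p + ENNReal.ofReal t • densM ptil)).toReal
          - (regLoglik N pA phat μ (densM p)).toReal) / t)
      (𝓝[>] 0)
      (𝓝 (∑ y ∈ Finset.range (N + 1),
            phat y * (∫ γ, pA y γ * ptil γ ∂lebI) / (∫ γ, pA y γ * p γ ∂lebI)
          + μ * ∫ γ, ptil γ / p γ ∂lebI - 1 - μ)) := by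
  obtain ⟨c, hc, hpc⟩ := hinf
  have hcp : ∀ᵐ γ ∂lebI, c ≤ p γ := by
    simpa using measure_eq_zero_iff_ae_notMem.1 hpc
  have hmarg_ne : ∀ y ∈ range (N + 1), phat y ≠ 0 → ∫ γ, pA y γ * p γ ∂lebI ≠ 0 :=
    fun y hy hy0 => (hmarg y hy ((hphat y).lt_of_ne' hy0)).ne'
  have hsum := tendsto_sum_log_lineMap_sub_div (range (N + 1)) phat
    (fun y => ∫ γ, pA y γ * p γ ∂lebI) (fun y => ∫ γ, pA y γ * ptil γ ∂lebI) hmarg_ne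
  have hint := tendsto_integral_log_lineMap_sub_div hp.1 hptil.1
    (hcp.mono fun γ hγ => hc.trans_le hγ) (ae_of_all _ hptil.2.1)
    (integrable_log_of_le hp.1 hp.integrable_s13 hc hcp) hratio
  have hlim : ∑ y ∈ range (N + 1),
        phat y * (∫ γ, pA y γ * ptil γ ∂lebI) / (∫ γ, pA y γ * p γ ∂lebI)
          + μ * ∫ γ, ptil γ / p γ ∂lebI - 1 - μ
      = ∑ y ∈ range (N + 1), phat y * (((∫ γ, pA y γ * ptil γ ∂lebI)
          - ∫ γ, pA y γ * p γ ∂lebI) / ∫ γ, pA y γ * p γ ∂lebI)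
        + μ * ∫ γ, (ptil γ / p γ - 1) ∂lebI := by
    rw [sum_mul_sub_div_self _ _ _ _ hmarg_ne, hphat1, integral_sub hratio (integrable_const 1)]
    simp only [integral_const, probReal_univ, smul_eq_mul, mul_one]
    ring
  rw [hlim]
  refine (hsum.add (hint.const_mul μ)).congr' ?_
  filter_upwards [Ioo_mem_nhdsGT one_pos] with t ht
  rw [toReal_regLoglik_lineMap phat μ hpAmeas hpAnonneg hpAsum hp hptil hc hcp hmarg ht.1.le ht.2,
    regLoglik_densM N pA phat μ hp.1 hp.2.1 hp.integrable_s13 hc hcp hmarg, EReal.toReal_coe]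
  ring

/-- **Lemma (Gâteaux derivative of `ℓ_μ` in an absolutely continuous direction).**
Fix `μ > 0`.  Let `P` and `P̃` be probability measures on `[0,1]` with Lebesgue
densities `p` and `p̃`, such that `ess inf p > 0`, `p_MA(y) > 0` whenever `p̂(y) > 0`,
and `∫₀¹ p̃/p < ∞`.  Then the one-sided directional derivative of `ℓ_μ` at `P` in the
direction `P̃ − P` exists and equals
`∑_y p̂(y) p_A(y;P̃)/p_MA(y) + μ·∫₀¹ p̃/p − 1 − μ`. -/
theorem gateaux_derivative_ac_direction
    (N : ℕ) (pA : ℕ → ℝ → ℝ) (phat : ℕ → ℝ)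
    (hpAmeas : ∀ y, Measurable (pA y)) (hpAnonneg : ∀ y γ, 0 ≤ pA y γ)
    (hpAsum : ∀ γ ∈ Set.Icc (0:ℝ) 1, ∑ y ∈ Finset.range (N + 1), pA y γ = 1)
    (hphat : ∀ y, 0 ≤ phat y) (hphat1 : ∑ y ∈ Finset.range (N + 1), phat y = 1)
    (μ : ℝ) (hμ : 0 < μ)
    (p ptil : ℝ → ℝ) (hp : IsDensity p) (hptil : IsDensity ptil)
    -- `ess inf_{γ∈[0,1]} p(γ) > 0`
    (hinf : ∃ c : ℝ, 0 < c ∧ lebI {γ : ℝ | p γ < c} = 0)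
    (hmarg : ∀ y ∈ Finset.range (N + 1), 0 < phat y → 0 < ∫ γ, pA y γ * p γ ∂lebI)
    -- `∫₀¹ p̃/p < ∞`
    (hratio : Integrable (fun γ => ptil γ / p γ) lebI) :
    Tendsto
      (fun t : ℝ =>
        ((regLoglik N pA phat μ
              (ENNReal.ofReal (1 - t) • densM p + ENNReal.ofReal t • densM ptil)).toReal
          - (regLoglik N pA phat μ (densM p)).toReal) / t)
      (𝓝[>] 0)
      (𝓝 (∑ y ∈ Finset.range (N + 1),
            phat y * (∫ γ, pA y γ * ptil γ ∂lebI) / (∫ γ, pA y γ * p γ ∂lebI)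
          + μ * ∫ γ, ptil γ / p γ ∂lebI - 1 - μ)) :=
  gateaux_derivative_ac_direction_general N pA phat hpAmeas hpAnonneg hpAsum hphat hphat1 μ p ptil
    hp hptil hinf hmarg hratio
end
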